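/- Let G = (V,E) be a locally d⁻-finite digraph and X, Y ⊆ V with X connected (as an induced subdigraph, i.e., any two vertices of X are joined by a directed path inside X). If Inf^∞ X ∩ Inf^∞ Y ≠ ∅ and Inf^∞ X ∩ Y = ∅, then Inf^∞ X ⊆ Inf^∞ Y. -/
import Mathlib


/-- Inflation of a vertex set in a digraph with arc relation `E`. -/
def dInfl {V : Type*} (E : V → V → Prop) (U : Set V) : Set V :=
  U ∪ {v | (∃ u, E u v) ∧ ∀ u, E u v → u ∈ U}

/-- Hyperinflation: union of all iterates of the inflation. -/
def dInflStar {V : Type*} (E : V → V → Prop) (U : Set V) : Set V :=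
  ⋃ n : ℕ, (dInfl E)^[n] U

section aux

variable {V : Type*} {E : V → V → Prop}

lemma subset_dInfl (U : Set V) : U ⊆ dInfl E U := Set.subset_union_left

lemma dInfl_mono {U W : Set V} (h : U ⊆ W) : dInfl E U ⊆ dInfl E W := by
  rintro v (h1 | h2)
  · exact Or.inl (h h1)
  · exact Or.inr ⟨h2.1, fun u hu => h (h2.2 u hu)⟩

lemma dInfl_iter_mono (n : ℕ) {U W : Set V} (h : U ⊆ W) :
    (dInfl E)^[n] U ⊆ (dInfl E)^[n] W := by
  induction n generalizing U W with
  | zero => exact h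
  | succ n ih => rw [Function.iterate_succ_apply, Function.iterate_succ_apply]
                 exact ih (dInfl_mono h)

lemma dInfl_iter_le {m n : ℕ} (h : m ≤ n) (U : Set V) :
    (dInfl E)^[m] U ⊆ (dInfl E)^[n] U := by
  induction h with
  | refl => exact subset_rfl
  | step _ ih =>
    rename_i k _
    refine ih.trans ?_
    rw [Function.iterate_succ_apply]
    exact dInfl_iter_mono k (subset_dInfl U)

lemma subset_dInflStar (U : Set V) : U ⊆ dInflStar E U :=
  Set.subset_iUnion_of_subset 0 subset_rfl

lemma dInflStar_branch {U : Set V} {v : V} (hv : v ∈ dInflStar E U) (hvU : v ∉ U) :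
    (∃ u, E u v) ∧ ∀ u, E u v → u ∈ dInflStar E U := by
  obtain ⟨n, hn⟩ := Set.mem_iUnion.mp hv
  induction n with
  | zero => exact absurd hn hvU
  | succ n ih =>
    rw [Function.iterate_succ_apply'] at hn
    rcases hn with h | h
    · exact ih h
    · exact ⟨h.1, fun u hu => Set.mem_iUnion.mpr ⟨n, h.2 u hu⟩⟩

lemma dInfl_dInflStar (hfin : ∀ v : V, {u | E u v}.Finite) (U : Set V) :
    dInfl E (dInflStar E U) ⊆ dInflStar E U := by
  rintro v (h | h)
  · exact h
  · classical
    obtain ⟨⟨u0, hu0⟩, hall⟩ := h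
    let f : V → ℕ := fun u =>
      if h : ∃ n, u ∈ (dInfl E)^[n] U then h.choose else 0
    have hf : ∀ u, E u v → u ∈ (dInfl E)^[f u] U := by
      intro u hu
      have hex := Set.mem_iUnion.mp (hall u hu)
      simp only [f, dif_pos hex]
      exact hex.choose_spec
    set N := ((hfin v).toFinset).sup f with hN
    refine Set.mem_iUnion.mpr ⟨N + 1, ?_⟩
    rw [Function.iterate_succ_apply']
    refine Or.inr ⟨⟨u0, hu0⟩, fun u hu => ?_⟩
    have hle : f u ≤ N := Finset.le_sup ((hfin v).mem_toFinset.mpr hu)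
    exact dInfl_iter_le hle U (hf u hu)

lemma dInflStar_subset (hfin : ∀ v : V, {u | E u v}.Finite) {U W : Set V}
    (h : U ⊆ dInflStar E W) : dInflStar E U ⊆ dInflStar E W := by
  intro v hv
  obtain ⟨n, hn⟩ := Set.mem_iUnion.mp hv
  clear hv
  induction n generalizing v with
  | zero => exact h hn
  | succ n ih =>
    rw [Function.iterate_succ_apply'] at hn
    rcases hn with h1 | h2
    · exact ih h1
    · exact dInfl_dInflStar hfin W
        (Or.inr ⟨h2.1, fun u hu => ih (h2.2 u hu)⟩)

end aux

theorem stmt_8 {V : Type*} (E : V → V → Prop)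
    (hfin : ∀ v : V, {u | E u v}.Finite) (X Y : Set V)
    (hconn : ∀ u ∈ X, ∀ v ∈ X,
      Relation.ReflTransGen (fun a b => b ∈ X ∧ E a b) u v)
    (hne : (dInflStar E X ∩ dInflStar E Y).Nonempty)
    (hXY : dInflStar E X ∩ Y = ∅) :
    dInflStar E X ⊆ dInflStar E Y := by
  have hnotY : ∀ v ∈ dInflStar E X, v ∉ Y := by
    intro v hv hvY
    have : v ∈ dInflStar E X ∩ Y := ⟨hv, hvY⟩
    rw [hXY] at this
    exact this
  -- Step 1: find a vertex of X in dInflStar E Y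
  have step1 : ∀ n : ℕ, ∀ v : V, v ∈ (dInfl E)^[n] X → v ∈ dInflStar E Y →
      ∃ x, x ∈ X ∧ x ∈ dInflStar E Y := by
    intro n
    induction n with
    | zero => exact fun v hvX hvY => ⟨v, hvX, hvY⟩
    | succ n ih =>
      intro v hvX hvY
      by_cases hx : v ∈ X
      · exact ⟨v, hx, hvY⟩
      rw [Function.iterate_succ_apply'] at hvX
      rcases hvX with h | h
      · exact ih v h hvY
      · have hvSX : v ∈ dInflStar E X := Set.mem_iUnion.mpr
          ⟨n + 1, by rw [Function.iterate_succ_apply']; exact Or.inr h⟩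
        obtain ⟨_, hallY⟩ := dInflStar_branch hvY (hnotY v hvSX)
        obtain ⟨u0, hu0⟩ := h.1
        exact ih u0 (h.2 u0 hu0) (hallY u0 hu0)
  obtain ⟨a, haX, haY⟩ := hne
  obtain ⟨n, hn⟩ := Set.mem_iUnion.mp haX
  obtain ⟨x₀, hx₀X, hx₀Y⟩ := step1 n a hn haY
  -- Step 2: all of X lies in dInflStar E Y
  have step2 : X ⊆ dInflStar E Y := by
    intro x hx
    have hpath := hconn x hx x₀ hx₀X
    clear hx
    induction hpath using Relation.ReflTransGen.head_induction_on with
    | refl => exact hx₀Y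
    | head hac _ ihc =>
      rename_i a c _
      obtain ⟨hcX, hEac⟩ := hac
      have hcY : c ∉ Y := hnotY c (subset_dInflStar X hcX)
      obtain ⟨_, hall⟩ := dInflStar_branch ihc hcY
      exact hall a hEac
  exact dInflStar_subset hfin step2
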